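/- There exists a positive constant C (depending only on λ) such that for all squares R ⊂ R̃ ⊂ Q with Q ∈ D_m, R̃ ∈ D_n, R ∈ D_{n+1} and m < n, one has |S_{Q,R} − S_{Q,R̃}| ≤ C a_n. -/

import Mathlib

open MeasureTheory Filter Set Topology
open scoped ENNReal

noncomputable section

/-- Side length of generation-`n` squares: `s n = λ₁ ⋯ λₙ` (here `Λ k` is `λ_{k+1}`). -/
def sideLen (Λ : ℕ → ℝ) (n : ℕ) : ℝ := ∏ k ∈ Finset.range n, Λ k

/-- Lower-left corner of the generation-`n` square encoded by the word `w`. -/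
def cornerPt (Λ : ℕ → ℝ) (w : ℕ → Bool × Bool) (n : ℕ) : ℂ :=
  ∑ k ∈ Finset.range n,
    (((if (w k).1 then sideLen Λ k - sideLen Λ (k + 1) else 0 : ℝ) : ℂ) +
      ((if (w k).2 then sideLen Λ k - sideLen Λ (k + 1) else 0 : ℝ) : ℂ) * Complex.I)

/-- The (closed) generation-`n` square encoded by the word `w`. -/
def cSquare (Λ : ℕ → ℝ) (w : ℕ → Bool × Bool) (n : ℕ) : Set ℂ :=
  {z : ℂ | (cornerPt Λ w n).re ≤ z.re ∧ z.re ≤ (cornerPt Λ w n).re + sideLen Λ n ∧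
    (cornerPt Λ w n).im ≤ z.im ∧ z.im ≤ (cornerPt Λ w n).im + sideLen Λ n}

/-- The family `𝒟_n` of generation-`n` squares. -/
def genSq (Λ : ℕ → ℝ) (n : ℕ) : Set (Set ℂ) := {Q | ∃ w, Q = cSquare Λ w n}

/-- The planar Cantor set `K = ⋂ₙ ⋃ⱼ Qⱼⁿ`. -/
def cantorK (Λ : ℕ → ℝ) : Set ℂ := ⋂ n, ⋃ w : ℕ → Bool × Bool, cSquare Λ w n

/-- The linear density `a_n = 4^{-n}/s_n` at generation `n`. -/
def linDensity (Λ : ℕ → ℝ) (n : ℕ) : ℝ := 1 / (4 ^ n * sideLen Λ n)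

/-- `S_Q`: the martingale value at a square `Q`,
`S_Q = μ(Q)⁻¹ ∫_Q ∫_{K ∖ Q} (z-y)⁻¹ dμ(y) dμ(z)`. -/
def SQ (Λ : ℕ → ℝ) (μ : Measure ℂ) (Q : Set ℂ) : ℂ :=
  ⨍ z in Q, ∫ y in cantorK Λ \ Q, (z - y)⁻¹ ∂μ ∂μ

/-- `S_{Q,R}`: the relative martingale started at `Q`, evaluated at `R ⊆ Q`,
`S_{Q,R} = μ(R)⁻¹ ∫_R ∫_{Q ∖ R} (z-y)⁻¹ dμ(y) dμ(z)`. -/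
def Srel (μ : Measure ℂ) (Q R : Set ℂ) : ℂ :=
  ⨍ z in R, ∫ y in Q \ R, (z - y)⁻¹ ∂μ ∂μ

/-! Write `𝒞 S z = ∫_S (z - y)⁻¹ dμ(y)` (`cauchyTransform μ S z`), so that `S_{Q,R}` is the
average of `F = 𝒞 (Q ∖ R)` over `R` and `S_{Q,R̃}` that of `G = 𝒞 (Q ∖ R̃)` over `R̃`; on `R`,
`F = G + 𝒞 (R̃ ∖ R)`. Two points of `K` lying in different children of a generation-`j` square
are at distance at least `s_j - 2 s_{j+1} ≥ (1 - 2λ) s_j`, since the children sit in opposite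
corners. Hence `|𝒞 (R̃ ∖ R)| ≤ μ(R̃) / ((1 - 2λ) s_n) = a_n / (1 - 2λ)` on `R`. Splitting
`Q ∖ R̃` into the shells `Q_k ∖ Q_{k+1}` (`m ≤ k < n`) of the squares containing `R̃`, the
oscillation of `G` on `R̃` is at most `∑_k diam(R̃) μ(Q_k) / ((1 - 2λ) s_k)²`, and
`4⁻ᵏ s_n / s_k² ≤ a_n (4λ²)^(n-k)` because `s_n ≤ λ^(n-k) s_k`: a geometric series, as
`λ < 1/2`. So `F` stays within `C a_n` of the average of `G` on all of `R`. -/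

lemma exists_lt_forall_lt_eq_and_ne {α : Type*} {u v : ℕ → α} {n : ℕ}
    (h : ∃ i < n, u i ≠ v i) : ∃ j < n, (∀ i < j, u i = v i) ∧ u j ≠ v j := by
  classical
  obtain ⟨hjn, hne⟩ := Nat.find_spec h
  exact ⟨_, hjn, fun i hi => by_contra fun hne' => Nat.find_min h hi ⟨hi.trans hjn, hne'⟩, hne⟩

lemma Antitone.diff_eq_biUnion_Ico_diff_succ {α : Type*} {s : ℕ → Set α} (hs : Antitone s)
    {m n : ℕ} (hmn : m ≤ n) : s m \ s n = ⋃ k ∈ Finset.Ico m n, (s k \ s (k + 1)) := by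
  induction n, hmn using Nat.le_induction with
  | base => simp
  | succ n hmn ih =>
    rw [Nat.Ico_succ_right_eq_insert_Ico hmn, Finset.set_biUnion_insert, ← ih, union_comm]
    exact (sdiff_union_sdiff_cancel (hs hmn) (hs n.le_succ)).symm

lemma Antitone.pairwise_disjoint_diff_succ {α : Type*} {s : ℕ → Set α} (hs : Antitone s) :
    Pairwise (Function.onFun Disjoint fun k => s k \ s (k + 1)) := by
  refine (pairwise_disjoint_on _).2 fun k l hkl => Set.disjoint_left.2 ?_
  rintro x ⟨-, hx⟩ ⟨hx', -⟩
  exact hx (hs hkl hx')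

lemma sum_Ico_pow_sub_le {r : ℝ} (h0 : 0 ≤ r) (h1 : r < 1) (m n : ℕ) :
    ∑ k ∈ Finset.Ico m n, r ^ (n - k) ≤ r / (1 - r) :=
  calc ∑ k ∈ Finset.Ico m n, r ^ (n - k) = ∑ j ∈ Finset.Ico (n + 1 - n) (n + 1 - m), r ^ j :=
        Finset.sum_Ico_reflect (r ^ ·) m n.le_succ
    _ ≤ r ^ (n + 1 - n) / (1 - r) := geom_sum_Ico_le_of_lt_one h0 h1
    _ = r / (1 - r) := by rw [Nat.add_sub_cancel_left, pow_one]

lemma norm_inv_sub_inv_le {𝕜 : Type*} [NormedField 𝕜] {a b : 𝕜} {r : ℝ} (hr : 0 < r)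
    (ha : r ≤ ‖a‖) (hb : r ≤ ‖b‖) : ‖a⁻¹ - b⁻¹‖ ≤ ‖a - b‖ / r ^ 2 := by
  have ha0 : a ≠ 0 := norm_pos_iff.1 (hr.trans_le ha)
  have hb0 : b ≠ 0 := norm_pos_iff.1 (hr.trans_le hb)
  rw [inv_sub_inv ha0 hb0, norm_div, norm_mul, norm_sub_rev, sq]
  gcongr

lemma norm_setAverage_sub_le {α E : Type*} [MeasurableSpace α] [NormedAddCommGroup E]
    [NormedSpace ℝ E] [CompleteSpace E] {μ : Measure α} {s : Set α} {f : α → E} {c : E} {C : ℝ}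
    (hs₀ : μ s ≠ 0) (hs : μ s ≠ ∞) (hf : IntegrableOn f s μ) (hC : ∀ x ∈ s, ‖f x - c‖ ≤ C) :
    ‖(⨍ x in s, f x ∂μ) - c‖ ≤ C := by
  have hpos : 0 < μ.real s := ENNReal.toReal_pos hs₀ hs
  have h : (⨍ x in s, f x ∂μ) - c = (μ.real s)⁻¹ • ∫ x in s, (f x - c) ∂μ := by
    rw [setAverage_eq, integral_sub hf (integrableOn_const hs), setIntegral_const, smul_sub,
      inv_smul_smul₀ hpos.ne']
  rw [h, norm_smul, Real.norm_of_nonneg (inv_nonneg.2 hpos.le), inv_mul_le_iff₀ hpos, mul_comm]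
  exact norm_setIntegral_le_of_norm_le_const hs.lt_top hC

def cauchyTransform (μ : Measure ℂ) (S : Set ℂ) (z : ℂ) : ℂ := ∫ y in S, (z - y)⁻¹ ∂μ

section CauchyTransform

variable {μ : Measure ℂ} {K S T : Set ℂ} {z z' : ℂ} {b : ℝ}

lemma integrableOn_inv_sub [IsFiniteMeasure μ] (hS : MeasurableSet S) (hK : ∀ᵐ y ∂μ, y ∈ K)
    (hb : 0 < b) (hsep : ∀ y ∈ S ∩ K, b ≤ ‖z - y‖) :
    IntegrableOn (fun y => (z - y)⁻¹) S μ := by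
  refine Measure.integrableOn_of_bounded (M := b⁻¹) (measure_ne_top μ S) (by fun_prop) ?_
  filter_upwards [ae_restrict_mem hS, ae_restrict_of_ae hK] with y hyS hyK
  rw [norm_inv]
  exact inv_anti₀ hb (hsep y ⟨hyS, hyK⟩)

lemma norm_cauchyTransform_le [IsFiniteMeasure μ] (hK : ∀ᵐ y ∂μ, y ∈ K) (hb : 0 < b)
    (hsep : ∀ y ∈ S ∩ K, b ≤ ‖z - y‖) : ‖cauchyTransform μ S z‖ ≤ b⁻¹ * μ.real S := by
  refine norm_setIntegral_le_of_norm_le_const_ae' (measure_lt_top μ S) ?_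
  filter_upwards [hK] with y hyK hyS
  rw [norm_inv]
  exact inv_anti₀ hb (hsep y ⟨hyS, hyK⟩)

lemma norm_cauchyTransform_sub_le [IsFiniteMeasure μ] (hS : MeasurableSet S)
    (hK : ∀ᵐ y ∂μ, y ∈ K) (hb : 0 < b) (hz : ∀ y ∈ S ∩ K, b ≤ ‖z - y‖)
    (hz' : ∀ y ∈ S ∩ K, b ≤ ‖z' - y‖) :
    ‖cauchyTransform μ S z - cauchyTransform μ S z'‖ ≤ ‖z - z'‖ / b ^ 2 * μ.real S := by
  rw [cauchyTransform, cauchyTransform, ← integral_sub (integrableOn_inv_sub hS hK hb hz)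
    (integrableOn_inv_sub hS hK hb hz')]
  refine norm_setIntegral_le_of_norm_le_const_ae' (measure_lt_top μ S) ?_
  filter_upwards [hK] with y hyK hyS
  simpa using norm_inv_sub_inv_le hb (hz y ⟨hyS, hyK⟩) (hz' y ⟨hyS, hyK⟩)

lemma stronglyMeasurable_cauchyTransform [SFinite μ] :
    StronglyMeasurable (cauchyTransform μ S) :=
  (measurable_fst.sub measurable_snd).inv.stronglyMeasurable.integral_prod_right

lemma integrableOn_cauchyTransform [IsFiniteMeasure μ] (hT : MeasurableSet T)
    (hK : ∀ᵐ y ∂μ, y ∈ K) (hb : 0 < b) (hsep : ∀ z ∈ T, ∀ y ∈ S ∩ K, b ≤ ‖z - y‖) :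
    IntegrableOn (cauchyTransform μ S) T μ :=
  Measure.integrableOn_of_bounded (measure_ne_top μ T)
    stronglyMeasurable_cauchyTransform.aestronglyMeasurable
    (ae_restrict_of_forall_mem hT fun z hz => norm_cauchyTransform_le hK hb (hsep z hz))

lemma cauchyTransform_diff_eq_add {Q Rt R : Set ℂ} (hRt : MeasurableSet Rt)
    (hR : MeasurableSet R) (hRRt : R ⊆ Rt) (hRtQ : Rt ⊆ Q)
    (hint : IntegrableOn (fun y => (z - y)⁻¹) (Q \ R) μ) :
    cauchyTransform μ (Q \ R) z = cauchyTransform μ (Q \ Rt) z + cauchyTransform μ (Rt \ R) z := by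
  rw [← sdiff_union_sdiff_cancel hRtQ hRRt] at hint ⊢
  exact setIntegral_union (Set.disjoint_left.2 fun y hy hy' => hy.2 hy'.1) (hRt.diff hR)
    (hint.mono_set subset_union_left) (hint.mono_set subset_union_right)

lemma cauchyTransform_diff_eq_sum {s : ℕ → Set ℂ} (hs : Antitone s)
    (hmeas : ∀ k, MeasurableSet (s k)) {m n : ℕ} (hmn : m ≤ n)
    (hint : ∀ k ∈ Finset.Ico m n, IntegrableOn (fun y => (z - y)⁻¹) (s k \ s (k + 1)) μ) :
    cauchyTransform μ (s m \ s n) z =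
      ∑ k ∈ Finset.Ico m n, cauchyTransform μ (s k \ s (k + 1)) z := by
  rw [cauchyTransform, hs.diff_eq_biUnion_Ico_diff_succ hmn]
  exact integral_biUnion_finset _ (fun k _ => (hmeas k).diff (hmeas (k + 1)))
    (hs.pairwise_disjoint_diff_succ.set_pairwise _) hint

end CauchyTransform

section Geometry

variable {Λ : ℕ → ℝ} {lam : ℝ} {u v w : ℕ → Bool × Bool} {n k j : ℕ} {z y : ℂ}

lemma sideLen_succ (n : ℕ) : sideLen Λ (n + 1) = sideLen Λ n * Λ n :=
  Finset.prod_range_succ _ _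

lemma sideLen_pos (hpos : ∀ i, 0 < Λ i) (n : ℕ) : 0 < sideLen Λ n :=
  Finset.prod_pos fun i _ => hpos i

lemma sideLen_antitone (hpos : ∀ i, 0 < Λ i) (h1 : ∀ i, Λ i ≤ 1) : Antitone (sideLen Λ) :=
  antitone_nat_of_succ_le fun n => by
    rw [sideLen_succ]
    exact mul_le_of_le_one_right (sideLen_pos hpos n).le (h1 n)

lemma sideLen_le_mul_pow (hpos : ∀ i, 0 < Λ i) (hle : ∀ i, Λ i ≤ lam) (hkn : k ≤ n) :
    sideLen Λ n ≤ sideLen Λ k * lam ^ (n - k) := by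
  induction n, hkn using Nat.le_induction with
  | base => simp
  | succ n hkn ih =>
    rw [sideLen_succ, Nat.sub_add_comm hkn, pow_succ, ← mul_assoc]
    exact mul_le_mul ih (hle n) (hpos n).le ((sideLen_pos hpos n).le.trans ih)

lemma sideLen_div_le_linDensity_mul (hpos : ∀ i, 0 < Λ i) (hle : ∀ i, Λ i ≤ lam) (hkn : k ≤ n) :
    sideLen Λ n / (4 ^ k * sideLen Λ k ^ 2) ≤ linDensity Λ n * (4 * lam ^ 2) ^ (n - k) := by
  obtain ⟨d, rfl⟩ := Nat.exists_eq_add_of_le hkn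
  have h := sideLen_le_mul_pow hpos hle hkn
  have hn := sideLen_pos hpos (k + d)
  have hk := sideLen_pos hpos k
  rw [Nat.add_sub_cancel_left] at h ⊢
  rw [linDensity, mul_pow, pow_add, ← pow_mul, div_le_iff₀ (by positivity)]
  field_simp
  rw [pow_mul', ← mul_pow]
  exact pow_le_pow_left₀ hn.le (by linarith) 2

lemma cornerPt_congr (h : ∀ i < n, u i = v i) : cornerPt Λ u n = cornerPt Λ v n :=
  Finset.sum_congr rfl fun i hi => by rw [h i (Finset.mem_range.1 hi)]

lemma cSquare_congr (h : ∀ i < n, u i = v i) : cSquare Λ u n = cSquare Λ v n := by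
  rw [cSquare, cSquare, cornerPt_congr h]

lemma cornerPt_re_succ : (cornerPt Λ w (n + 1)).re =
    (cornerPt Λ w n).re + if (w n).1 then sideLen Λ n - sideLen Λ (n + 1) else 0 := by
  simp [cornerPt, Finset.sum_range_succ, Complex.re_sum]

lemma cornerPt_im_succ : (cornerPt Λ w (n + 1)).im =
    (cornerPt Λ w n).im + if (w n).2 then sideLen Λ n - sideLen Λ (n + 1) else 0 := by
  simp [cornerPt, Finset.sum_range_succ, Complex.im_sum]

lemma cornerPt_mem_cSquare (hpos : ∀ i, 0 < Λ i) : cornerPt Λ w n ∈ cSquare Λ w n := by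
  have := sideLen_pos hpos n
  exact ⟨le_rfl, by linarith, le_rfl, by linarith⟩

lemma isClosed_cSquare : IsClosed (cSquare Λ w n) := by
  have : cSquare Λ w n = Icc (cornerPt Λ w n).re ((cornerPt Λ w n).re + sideLen Λ n) ×ℂ
      Icc (cornerPt Λ w n).im ((cornerPt Λ w n).im + sideLen Λ n) := by
    ext z
    simp [cSquare, Complex.mem_reProdIm, and_assoc]
  rw [this]
  exact isClosed_Icc.reProdIm isClosed_Icc

lemma measurableSet_cSquare : MeasurableSet (cSquare Λ w n) :=
  isClosed_cSquare.measurableSet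

lemma norm_sub_le_of_mem_cSquare (hz : z ∈ cSquare Λ w n) (hy : y ∈ cSquare Λ w n) :
    ‖z - y‖ ≤ 2 * sideLen Λ n := by
  obtain ⟨hz₁, hz₂, hz₃, hz₄⟩ := hz
  obtain ⟨hy₁, hy₂, hy₃, hy₄⟩ := hy
  calc ‖z - y‖ ≤ |(z - y).re| + |(z - y).im| := Complex.norm_le_abs_re_add_abs_im _
    _ ≤ sideLen Λ n + sideLen Λ n := by
      rw [Complex.sub_re, Complex.sub_im]
      gcongr <;> rw [abs_le] <;> constructor <;> linarith
    _ = 2 * sideLen Λ n := by ring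

lemma cSquare_succ_subset (hpos : ∀ i, 0 < Λ i) (h1 : ∀ i, Λ i ≤ 1) :
    cSquare Λ w (n + 1) ⊆ cSquare Λ w n := by
  rintro z ⟨h₁, h₂, h₃, h₄⟩
  rw [cornerPt_re_succ] at h₁ h₂
  rw [cornerPt_im_succ] at h₃ h₄
  have := sideLen_antitone hpos h1 n.le_succ
  have := sideLen_pos hpos (n + 1)
  refine ⟨?_, ?_, ?_, ?_⟩
  · split_ifs at h₁ <;> linarith
  · split_ifs at h₂ <;> linarith
  · split_ifs at h₃ <;> linarith
  · split_ifs at h₄ <;> linarith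

lemma cSquare_antitone (hpos : ∀ i, 0 < Λ i) (h1 : ∀ i, Λ i ≤ 1) : Antitone (cSquare Λ w) :=
  antitone_nat_of_succ_le fun _ => cSquare_succ_subset hpos h1

lemma sub_two_mul_le_abs_sub_of_ne {b b' : Bool} (hb : b ≠ b') {P x y s s' : ℝ}
    (hx₁ : P + (if b then s - s' else 0) ≤ x) (hx₂ : x ≤ P + (if b then s - s' else 0) + s')
    (hy₁ : P + (if b' then s - s' else 0) ≤ y) (hy₂ : y ≤ P + (if b' then s - s' else 0) + s') :
    s - 2 * s' ≤ |x - y| := by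
  cases b <;> cases b' <;> simp only [ne_eq, not_true_eq_false, if_true, if_false,
    Bool.false_eq_true] at hb hx₁ hx₂ hy₁ hy₂ ⊢
  · rw [abs_sub_comm]; exact le_abs.2 (Or.inl (by linarith))
  · exact le_abs.2 (Or.inl (by linarith))

lemma sideLen_sub_two_mul_le_norm_sub (hpre : ∀ i < j, u i = v i) (hne : u j ≠ v j)
    (hz : z ∈ cSquare Λ u (j + 1)) (hy : y ∈ cSquare Λ v (j + 1)) :
    sideLen Λ j - 2 * sideLen Λ (j + 1) ≤ ‖z - y‖ := by
  obtain ⟨hz₁, hz₂, hz₃, hz₄⟩ := hz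
  obtain ⟨hy₁, hy₂, hy₃, hy₄⟩ := hy
  rw [cornerPt_re_succ, cornerPt_congr hpre] at hz₁ hz₂
  rw [cornerPt_im_succ, cornerPt_congr hpre] at hz₃ hz₄
  rw [cornerPt_re_succ] at hy₁ hy₂
  rw [cornerPt_im_succ] at hy₃ hy₄
  by_cases h₁ : (u j).1 = (v j).1
  · have h₂ : (u j).2 ≠ (v j).2 := fun h₂ => hne (Prod.ext h₁ h₂)
    calc _ ≤ |z.im - y.im| := sub_two_mul_le_abs_sub_of_ne h₂ hz₃ hz₄ hy₃ hy₄
      _ ≤ ‖z - y‖ := by simpa using Complex.abs_im_le_norm (z - y)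
  · calc _ ≤ |z.re - y.re| := sub_two_mul_le_abs_sub_of_ne h₁ hz₁ hz₂ hy₁ hy₂
      _ ≤ ‖z - y‖ := by simpa using Complex.abs_re_le_norm (z - y)

lemma eq_of_cSquare_subset (hpos : ∀ i, 0 < Λ i) (hhalf : ∀ i, Λ i < 1 / 2) {n' : ℕ}
    (h : cSquare Λ u n' ⊆ cSquare Λ v n) (hn : n ≤ n') : ∀ i < n, u i = v i := by
  have h1 : ∀ i, Λ i ≤ 1 := fun i => by linarith [hhalf i]
  have hz := cornerPt_mem_cSquare (w := u) (n := n') hpos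
  by_contra! hdiff
  obtain ⟨j, hjn, hpre, hne⟩ := exists_lt_forall_lt_eq_and_ne hdiff
  have hsep := sideLen_sub_two_mul_le_norm_sub hpre hne
    (cSquare_antitone hpos h1 (by omega) hz) (cSquare_antitone hpos h1 (by omega) (h hz))
  rw [sub_self, norm_zero, sideLen_succ] at hsep
  nlinarith [sideLen_pos hpos j, hhalf j]

lemma le_norm_sub_of_notMem_cSquare_succ (hpos : ∀ i, 0 < Λ i) (hle : ∀ i, Λ i ≤ lam)
    (hlam : lam < 1 / 2) (hkn : k < n) (hz : z ∈ cSquare Λ u n) (hy : y ∈ cantorK Λ)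
    (hy' : y ∉ cSquare Λ u (k + 1)) : (1 - 2 * lam) * sideLen Λ k ≤ ‖z - y‖ := by
  have h1 : ∀ i, Λ i ≤ 1 := fun i => by linarith [hle i]
  obtain ⟨t, hyt⟩ := mem_iUnion.1 (mem_iInter.1 hy (k + 1))
  have hdiff : ∃ i < k + 1, u i ≠ t i := by
    by_contra! h
    exact hy' (cSquare_congr h ▸ hyt)
  obtain ⟨j, hjk, hpre, hne⟩ := exists_lt_forall_lt_eq_and_ne hdiff
  calc (1 - 2 * lam) * sideLen Λ k ≤ (1 - 2 * lam) * sideLen Λ j := by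
        gcongr
        · linarith
        · exact sideLen_antitone hpos h1 (by omega)
    _ ≤ sideLen Λ j - 2 * sideLen Λ (j + 1) := by
        rw [sideLen_succ]
        nlinarith [sideLen_pos hpos j, hle j]
    _ ≤ ‖z - y‖ := sideLen_sub_two_mul_le_norm_sub hpre hne
        (cSquare_antitone hpos h1 (by omega) hz) (cSquare_antitone hpos h1 (by omega) hyt)

lemma le_norm_sub_of_notMem_cSquare (hpos : ∀ i, 0 < Λ i) (hle : ∀ i, Λ i ≤ lam)
    (hlam : lam < 1 / 2) (hz : z ∈ cSquare Λ u n) (hy : y ∈ cantorK Λ)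
    (hy' : y ∉ cSquare Λ u n) : (1 - 2 * lam) * sideLen Λ n ≤ ‖z - y‖ := by
  cases n with
  | zero =>
    obtain ⟨t, hyt⟩ := mem_iUnion.1 (mem_iInter.1 hy 0)
    exact absurd (cSquare_congr (fun i hi => absurd hi i.not_lt_zero) ▸ hyt) hy'
  | succ k =>
    calc (1 - 2 * lam) * sideLen Λ (k + 1) ≤ (1 - 2 * lam) * sideLen Λ k := by
          gcongr
          · linarith
          · exact sideLen_antitone hpos (fun i => by linarith [hle i]) k.le_succ
      _ ≤ ‖z - y‖ := le_norm_sub_of_notMem_cSquare_succ hpos hle hlam k.lt_succ_self hz hy hy'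

lemma measurableSet_cantorK : MeasurableSet (cantorK Λ) := by
  refine MeasurableSet.iInter fun n => ?_
  -- a generation-`n` square only depends on the first `n` letters of its word
  have hfin : (range fun w => cSquare Λ w n).Finite := by
    refine (finite_range fun p : Fin n → Bool × Bool =>
      cSquare Λ (fun i => if h : i < n then p ⟨i, h⟩ else default) n).subset ?_
    rintro _ ⟨w, rfl⟩
    exact ⟨fun i => w i, cSquare_congr fun i hi => by simp [hi]⟩
  rw [← sUnion_range]
  exact .sUnion hfin.countable (forall_mem_range.2 fun _ => measurableSet_cSquare)

end Geometry

section Estimates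

variable {Λ : ℕ → ℝ} {lam : ℝ} {u : ℕ → Bool × Bool} {m n : ℕ} {μ : Measure ℂ}

lemma ae_mem_cantorK [IsProbabilityMeasure μ] (hμK : μ (cantorK Λ) = 1) :
    ∀ᵐ y ∂μ, y ∈ cantorK Λ :=
  (ae_iff_measure_eq (p := (· ∈ cantorK Λ)) measurableSet_cantorK.nullMeasurableSet).2
    (by rw [ofPred_mem_eq, hμK, measure_univ])

lemma measureReal_cSquare
    (hμQ : ∀ (w : ℕ → Bool × Bool) (k : ℕ), μ (cSquare Λ w k) = (4 : ℝ≥0∞)⁻¹ ^ k)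
    (w : ℕ → Bool × Bool) (k : ℕ) : μ.real (cSquare Λ w k) = (4 ^ k)⁻¹ := by
  simp [measureReal_def, hμQ]

lemma norm_cauchyTransform_diff_succ_le [IsFiniteMeasure μ] (hpos : ∀ i, 0 < Λ i)
    (hle : ∀ i, Λ i ≤ lam) (hlam : lam < 1 / 2) (hK : ∀ᵐ y ∂μ, y ∈ cantorK Λ)
    (hμQ : ∀ (w : ℕ → Bool × Bool) (k : ℕ), μ (cSquare Λ w k) = (4 : ℝ≥0∞)⁻¹ ^ k)
    {z : ℂ} (hz : z ∈ cSquare Λ u (n + 1)) :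
    ‖cauchyTransform μ (cSquare Λ u n \ cSquare Λ u (n + 1)) z‖ ≤
      1 / (1 - 2 * lam) * linDensity Λ n := by
  have hc : 0 < 1 - 2 * lam := by linarith
  have hs := sideLen_pos hpos n
  calc _ ≤ ((1 - 2 * lam) * sideLen Λ n)⁻¹ * μ.real (cSquare Λ u n \ cSquare Λ u (n + 1)) :=
        norm_cauchyTransform_le hK (by positivity) fun y hy =>
          le_norm_sub_of_notMem_cSquare_succ hpos hle hlam n.lt_succ_self hz hy.2 hy.1.2
    _ ≤ ((1 - 2 * lam) * sideLen Λ n)⁻¹ * (4 ^ n)⁻¹ := by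
        gcongr
        exact (measureReal_mono sdiff_subset).trans_eq (measureReal_cSquare hμQ u n)
    _ = 1 / (1 - 2 * lam) * linDensity Λ n := by
        rw [linDensity]
        field_simp

lemma norm_cauchyTransform_shell_sub_le [IsFiniteMeasure μ] (hpos : ∀ i, 0 < Λ i)
    (hle : ∀ i, Λ i ≤ lam) (hlam : lam < 1 / 2) (hK : ∀ᵐ y ∂μ, y ∈ cantorK Λ)
    (hμQ : ∀ (w : ℕ → Bool × Bool) (k : ℕ), μ (cSquare Λ w k) = (4 : ℝ≥0∞)⁻¹ ^ k)
    {k : ℕ} (hkn : k < n) {z z' : ℂ} (hz : z ∈ cSquare Λ u n) (hz' : z' ∈ cSquare Λ u n) :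
    ‖cauchyTransform μ (cSquare Λ u k \ cSquare Λ u (k + 1)) z -
        cauchyTransform μ (cSquare Λ u k \ cSquare Λ u (k + 1)) z'‖ ≤
      2 / (1 - 2 * lam) ^ 2 * linDensity Λ n * (4 * lam ^ 2) ^ (n - k) := by
  have hsk := sideLen_pos hpos k
  have hsn := sideLen_pos hpos n
  have hb : 0 < (1 - 2 * lam) * sideLen Λ k := mul_pos (by linarith) hsk
  have hsep : ∀ x ∈ cSquare Λ u n, ∀ y ∈ (cSquare Λ u k \ cSquare Λ u (k + 1)) ∩ cantorK Λ,
      (1 - 2 * lam) * sideLen Λ k ≤ ‖x - y‖ := fun x hx y hy =>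
    le_norm_sub_of_notMem_cSquare_succ hpos hle hlam hkn hx hy.2 hy.1.2
  calc _ ≤ ‖z - z'‖ / ((1 - 2 * lam) * sideLen Λ k) ^ 2 *
        μ.real (cSquare Λ u k \ cSquare Λ u (k + 1)) :=
        norm_cauchyTransform_sub_le (measurableSet_cSquare.diff measurableSet_cSquare) hK hb
          (hsep z hz) (hsep z' hz')
    _ ≤ 2 * sideLen Λ n / ((1 - 2 * lam) * sideLen Λ k) ^ 2 * (4 ^ k)⁻¹ := by
        gcongr
        · exact norm_sub_le_of_mem_cSquare hz hz'
        · exact (measureReal_mono sdiff_subset).trans_eq (measureReal_cSquare hμQ u k)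
    _ = 2 / (1 - 2 * lam) ^ 2 * (sideLen Λ n / (4 ^ k * sideLen Λ k ^ 2)) := by
        field_simp
    _ ≤ _ := by
        rw [mul_assoc]
        gcongr
        exact sideLen_div_le_linDensity_mul hpos hle hkn.le

lemma norm_cauchyTransform_sub_le_of_mem_cSquare [IsFiniteMeasure μ] (hpos : ∀ i, 0 < Λ i)
    (hle : ∀ i, Λ i ≤ lam) (hlam : lam < 1 / 2) (hK : ∀ᵐ y ∂μ, y ∈ cantorK Λ)
    (hμQ : ∀ (w : ℕ → Bool × Bool) (k : ℕ), μ (cSquare Λ w k) = (4 : ℝ≥0∞)⁻¹ ^ k)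
    (hmn : m ≤ n) {z z' : ℂ} (hz : z ∈ cSquare Λ u n) (hz' : z' ∈ cSquare Λ u n) :
    ‖cauchyTransform μ (cSquare Λ u m \ cSquare Λ u n) z -
        cauchyTransform μ (cSquare Λ u m \ cSquare Λ u n) z'‖ ≤
      2 / (1 - 2 * lam) ^ 2 * (4 * lam ^ 2 / (1 - 4 * lam ^ 2)) * linDensity Λ n := by
  have hc : 0 < 1 - 2 * lam := by linarith
  have hr : 4 * lam ^ 2 < 1 := by nlinarith [hpos 0, hle 0]
  have hsum : ∀ x ∈ cSquare Λ u n, cauchyTransform μ (cSquare Λ u m \ cSquare Λ u n) x =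
      ∑ k ∈ Finset.Ico m n, cauchyTransform μ (cSquare Λ u k \ cSquare Λ u (k + 1)) x :=
    fun x hx => cauchyTransform_diff_eq_sum (cSquare_antitone hpos fun i => by linarith [hle i])
      (fun _ => measurableSet_cSquare) hmn fun k hk =>
        integrableOn_inv_sub (measurableSet_cSquare.diff measurableSet_cSquare) hK
          (mul_pos hc (sideLen_pos hpos k)) fun y hy =>
            le_norm_sub_of_notMem_cSquare_succ hpos hle hlam (Finset.mem_Ico.1 hk).2 hx hy.2 hy.1.2
  rw [hsum z hz, hsum z' hz', ← Finset.sum_sub_distrib]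
  calc _ ≤ ∑ k ∈ Finset.Ico m n,
        2 / (1 - 2 * lam) ^ 2 * linDensity Λ n * (4 * lam ^ 2) ^ (n - k) :=
        (norm_sum_le _ _).trans <| Finset.sum_le_sum fun k hk =>
          norm_cauchyTransform_shell_sub_le hpos hle hlam hK hμQ (Finset.mem_Ico.1 hk).2 hz hz'
    _ ≤ _ := by
        rw [← Finset.mul_sum, mul_right_comm]
        have := sideLen_pos hpos n
        gcongr
        · rw [linDensity]; positivity
        · exact sum_Ico_pow_sub_le (by positivity) hr m n

lemma norm_Srel_succ_sub_Srel_le [IsProbabilityMeasure μ] (hpos : ∀ i, 0 < Λ i)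
    (hle : ∀ i, Λ i ≤ lam) (hlam : lam < 1 / 2) (hμK : μ (cantorK Λ) = 1)
    (hμQ : ∀ (w : ℕ → Bool × Bool) (k : ℕ), μ (cSquare Λ w k) = (4 : ℝ≥0∞)⁻¹ ^ k)
    (hmn : m ≤ n) :
    ‖Srel μ (cSquare Λ u m) (cSquare Λ u (n + 1)) - Srel μ (cSquare Λ u m) (cSquare Λ u n)‖ ≤
      (2 / (1 - 2 * lam) ^ 2 * (4 * lam ^ 2 / (1 - 4 * lam ^ 2)) + 1 / (1 - 2 * lam)) *
        linDensity Λ n := by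
  have hK := ae_mem_cantorK hμK
  have hc : 0 < 1 - 2 * lam := by linarith
  have h1 : ∀ i, Λ i ≤ 1 := fun i => by linarith [hle i]
  set Q := cSquare Λ u m
  set Rt := cSquare Λ u n
  set R := cSquare Λ u (n + 1)
  have hRRt : R ⊆ Rt := cSquare_succ_subset hpos h1
  have hRtQ : Rt ⊆ Q := cSquare_antitone hpos h1 hmn
  have hsepR : ∀ z ∈ R, ∀ y ∈ (Q \ R) ∩ cantorK Λ,
      (1 - 2 * lam) * sideLen Λ (n + 1) ≤ ‖z - y‖ :=
    fun z hz y hy => le_norm_sub_of_notMem_cSquare hpos hle hlam hz hy.2 hy.1.2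
  have hsepRt : ∀ z ∈ Rt, ∀ y ∈ (Q \ Rt) ∩ cantorK Λ, (1 - 2 * lam) * sideLen Λ n ≤ ‖z - y‖ :=
    fun z hz y hy => le_norm_sub_of_notMem_cSquare hpos hle hlam hz hy.2 hy.1.2
  have hbR : 0 < (1 - 2 * lam) * sideLen Λ (n + 1) := mul_pos hc (sideLen_pos hpos _)
  have hbRt : 0 < (1 - 2 * lam) * sideLen Λ n := mul_pos hc (sideLen_pos hpos _)
  show ‖(⨍ z in R, cauchyTransform μ (Q \ R) z ∂μ) - ⨍ z in Rt, cauchyTransform μ (Q \ Rt) z ∂μ‖ ≤ _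
  set G := cauchyTransform μ (Q \ Rt)
  have hsplit : ∀ z ∈ R, cauchyTransform μ (Q \ R) z = G z + cauchyTransform μ (Rt \ R) z :=
    fun z hz => cauchyTransform_diff_eq_add measurableSet_cSquare measurableSet_cSquare hRRt hRtQ
      (integrableOn_inv_sub (measurableSet_cSquare.diff measurableSet_cSquare) hK hbR
        (hsepR z hz))
  have hGavg : ∀ z ∈ Rt, ‖G z - ⨍ x in Rt, G x ∂μ‖ ≤
      2 / (1 - 2 * lam) ^ 2 * (4 * lam ^ 2 / (1 - 4 * lam ^ 2)) * linDensity Λ n := fun z hz => by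
    rw [norm_sub_rev]
    exact norm_setAverage_sub_le (by simp [Rt, hμQ]) (measure_ne_top μ Rt)
      (integrableOn_cauchyTransform measurableSet_cSquare hK hbRt hsepRt) fun z' hz' =>
        norm_cauchyTransform_sub_le_of_mem_cSquare hpos hle hlam hK hμQ hmn hz' hz
  refine norm_setAverage_sub_le (by simp [R, hμQ]) (measure_ne_top μ R)
    (integrableOn_cauchyTransform measurableSet_cSquare hK hbR hsepR) fun z hz => ?_
  rw [hsplit z hz, add_sub_right_comm, add_mul]
  exact (norm_add_le _ _).trans (add_le_add (hGavg z (hRRt hz))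
    (norm_cauchyTransform_diff_succ_le hpos hle hlam hK hμQ hz))

end Estimates

/-- `|S_{Q,R} - S_{Q,R̃}| ≤ C a_n` for squares `R ⊆ R̃ ⊆ Q` with `Q ∈ 𝒟_m`, `R̃ ∈ 𝒟_n`,
`R ∈ 𝒟_{n+1}` and `m < n`. -/
theorem relative_martingale_increment_bound (Λ : ℕ → ℝ) (lam : ℝ) (hlam : lam < 1 / 2)
    (hΛ : ∀ n, 1 / 4 ≤ Λ n ∧ Λ n ≤ lam)
    (μ : Measure ℂ) [IsProbabilityMeasure μ]
    (hμK : μ (cantorK Λ) = 1)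
    (hμQ : ∀ (w : ℕ → Bool × Bool) (n : ℕ), μ (cSquare Λ w n) = (4 : ℝ≥0∞)⁻¹ ^ n) :
    ∃ C : ℝ, 0 < C ∧ ∀ (m n : ℕ), m < n → ∀ Q ∈ genSq Λ m, ∀ Rt ∈ genSq Λ n,
      ∀ R ∈ genSq Λ (n + 1), R ⊆ Rt → Rt ⊆ Q →
        ‖Srel μ Q R - Srel μ Q Rt‖ ≤ C * linDensity Λ n := by
  have hpos : ∀ i, 0 < Λ i := fun i => by linarith [(hΛ i).1]
  have hle : ∀ i, Λ i ≤ lam := fun i => (hΛ i).2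
  have hc : 0 < 1 - 2 * lam := by linarith
  have hr : 0 < 1 - 4 * lam ^ 2 := by nlinarith [hpos 0, hle 0]
  refine ⟨2 / (1 - 2 * lam) ^ 2 * (4 * lam ^ 2 / (1 - 4 * lam ^ 2)) + 1 / (1 - 2 * lam),
    add_pos_of_nonneg_of_pos (mul_nonneg (by positivity) (div_nonneg (by positivity) hr.le))
      (one_div_pos.2 hc), ?_⟩
  rintro m n hmn _ ⟨w, rfl⟩ _ ⟨v, rfl⟩ _ ⟨u, rfl⟩ hRRt hRtQ
  have hhalf : ∀ i, Λ i < 1 / 2 := fun i => (hle i).trans_lt hlam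
  have huv := eq_of_cSquare_subset hpos hhalf hRRt n.le_succ
  have hvw := eq_of_cSquare_subset hpos hhalf hRtQ hmn.le
  rw [cSquare_congr fun i hi => ((huv i (hi.trans hmn)).trans (hvw i hi)).symm,
    cSquare_congr fun i hi => (huv i hi).symm]
  exact norm_Srel_succ_sub_Srel_le hpos hle hlam hμK hμQ hmn.le
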